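/- arXiv:1108.2224 — 6 statements merged into one kernel-verified Lean document; each statement's English description precedes it below -/
import Mathlib

section
/- If φ is a symmetric bilinear form on V of rank at least 3 and A ∈ GL(V) satisfies A*R_φ = R_φ, then A*φ = φ or A*φ = −φ; conversely if A*φ = ±φ then A*R_φ = R_φ. Hence the structure group of R_φ is {A ∈ GL(V) : A*φ = ±φ}. -/
/-- The canonical algebraic curvature tensor built from a symmetric bilinear form. -/
def canACT {V : Type*} [AddCommGroup V] [Module ℝ V]
    (φ : LinearMap.BilinForm ℝ V) (x y z w : V) : ℝ :=
  φ x w * φ y z - φ x z * φ y w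

/-- Given finitely many linearly independent linear functionals, there is a dual family
of vectors. -/
lemma exists_dual_family {V : Type*} [AddCommGroup V] [Module ℝ V]
    (f : Fin 3 → (V →ₗ[ℝ] ℝ)) (hf : LinearIndependent ℝ f) :
    ∃ u : Fin 3 → V, ∀ i j, f i (u j) = if i = j then 1 else 0 := by
  have hsurj : Function.Surjective (LinearMap.pi f : V →ₗ[ℝ] (Fin 3 → ℝ)) := by
    rw [← LinearMap.range_eq_top]
    by_contra hne
    obtain ⟨ℓ, hℓ0, hℓ⟩ := Submodule.exists_dual_map_eq_bot_of_lt_top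
      (lt_top_iff_ne_top.mpr hne) inferInstance
    have hval : ∀ v : V, ℓ (LinearMap.pi f v) = 0 := by
      intro v
      have hm : ℓ (LinearMap.pi f v) ∈ Submodule.map ℓ (LinearMap.range (LinearMap.pi f)) :=
        Submodule.mem_map_of_mem ⟨v, rfl⟩
      rw [hℓ] at hm
      simpa using hm
    set a : Fin 3 → ℝ := fun i => ℓ (Pi.single i 1) with ha
    have hexp : ∀ c : Fin 3 → ℝ, ℓ c = ∑ i, c i * a i := by
      intro c
      have hc : c = ∑ i, c i • (Pi.single i 1 : Fin 3 → ℝ) := by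
        ext j
        simp [Pi.single_apply]
      conv_lhs => rw [hc]
      simp [ha]
    have hzero : (∑ i, a i • f i) = 0 := by
      ext v
      have := hval v
      rw [hexp] at this
      simpa [LinearMap.pi_apply, mul_comm] using this
    have ha0 : ∀ i, a i = 0 := Fintype.linearIndependent_iff.mp hf a hzero
    apply hℓ0
    refine LinearMap.ext fun c => ?_
    rw [hexp]
    simp [ha0]
  refine ⟨fun j => Classical.choose (hsurj (Pi.single j 1)), ?_⟩
  intro i j
  have hj := Classical.choose_spec (hsurj (Pi.single j 1))
  have h2 := congrFun hj i
  rw [LinearMap.pi_apply] at h2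
  rw [h2, Pi.single_apply]

theorem stmt5 {V : Type*} [AddCommGroup V] [Module ℝ V] [FiniteDimensional ℝ V]
    (φ : LinearMap.BilinForm ℝ V) (hsymm : ∀ x y : V, φ x y = φ y x)
    (hrank : 3 ≤ LinearMap.rank (φ : V →ₗ[ℝ] V →ₗ[ℝ] ℝ))
    (A : V ≃ₗ[ℝ] V) :
    (∀ x y z w : V, canACT φ (A x) (A y) (A z) (A w) = canACT φ x y z w) ↔
      ((∀ x y : V, φ (A x) (A y) = φ x y) ∨ (∀ x y : V, φ (A x) (A y) = - φ x y)) := by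
  constructor
  · intro H
    -- extract three vectors with independent functionals φ (x i)
    obtain ⟨s, hs, hsli⟩ :=
      (LinearMap.le_rank_iff_exists_linearIndependent_finset (n := 3)
        (f := (φ : V →ₗ[ℝ] V →ₗ[ℝ] ℝ))).mp (by exact_mod_cast hrank)
    have e : Fin 3 ≃ (s : Set V) := (s.equivFinOfCardEq hs).symm
    set x : Fin 3 → V := fun i => ((e i : s) : V) with hx
    have hfli : LinearIndependent ℝ (fun i => (φ (x i) : V →ₗ[ℝ] ℝ)) :=
      hsli.comp e e.injective
    obtain ⟨u, hδ⟩ := exists_dual_family _ hfli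
    set ψ : V → V → ℝ := fun p q => φ (A p) (A q) with hψ
    have H' : ∀ p q z w : V, ψ p w * ψ q z - ψ p z * ψ q w
        = φ p w * φ q z - φ p z * φ q w := fun p q z w => H p q z w
    have key : ∀ i j : Fin 3, i ≠ j → ∀ z, ψ (x i) z
        = ψ (x i) (u i) * φ (x i) z + ψ (x i) (u j) * φ (x j) z := by
      intro i j hij z
      have E1 := H' (x i) (x j) z (u i)
      have E2 := H' (x i) (x j) z (u j)
      have D := H' (x i) (x j) (u i) (u j)
      have δii : φ (x i) (u i) = 1 := by rw [hδ]; simp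
      have δjj : φ (x j) (u j) = 1 := by rw [hδ]; simp
      have δij : φ (x i) (u j) = 0 := by rw [hδ]; simp [hij]
      have δji : φ (x j) (u i) = 0 := by rw [hδ]; simp [Ne.symm hij]
      rw [δii, δji] at E1
      rw [δij, δjj] at E2
      rw [δij, δji, δii, δjj] at D
      linear_combination (ψ (x i) (u j)) * E1 - (ψ (x i) (u i)) * E2 + (ψ (x i) z) * D
    have hc0 : ∀ i j : Fin 3, i ≠ j → ψ (x i) (u j) = 0 := by
      intro i j hij
      obtain ⟨k, hki, hkj⟩ : ∃ k : Fin 3, i ≠ k ∧ k ≠ j := by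
        fin_cases i <;> fin_cases j <;> first | (exact absurd rfl hij) | decide
      have hk := key i k hki (u j)
      have δij : φ (x i) (u j) = 0 := by rw [hδ]; simp [hij]
      have δkj : φ (x k) (u j) = 0 := by rw [hδ]; simp [hkj]
      rw [δij, δkj] at hk
      simpa using hk
    have hline : ∀ i : Fin 3, ∀ z, ψ (x i) z = ψ (x i) (u i) * φ (x i) z := by
      intro i z
      obtain ⟨j, hij⟩ : ∃ j : Fin 3, i ≠ j := by
        fin_cases i <;> decide
      have hk := key i j hij z
      rw [hc0 i j hij] at hk
      simpa using hk
    have hprod : ∀ i j : Fin 3, i ≠ j → ψ (x i) (u i) * ψ (x j) (u j) = 1 := by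
      intro i j hij
      have D := H' (x i) (x j) (u i) (u j)
      have δii : φ (x i) (u i) = 1 := by rw [hδ]; simp
      have δjj : φ (x j) (u j) = 1 := by rw [hδ]; simp
      have δij : φ (x i) (u j) = 0 := by rw [hδ]; simp [hij]
      have δji : φ (x j) (u i) = 0 := by rw [hδ]; simp [Ne.symm hij]
      rw [δij, δji, δii, δjj, hc0 i j hij, hc0 j i (Ne.symm hij)] at D
      linarith
    have h01 := hprod 0 1 (by decide)
    have h02 := hprod 0 2 (by decide)
    have h12 := hprod 1 2 (by decide)
    set ε : ℝ := ψ (x 0) (u 0) with hε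
    have hee : ε * ε = 1 := by
      linear_combination (ψ (x 0) (u 0) * ψ (x 2) (u 2)) * h01
        - (ψ (x 0) (u 0) * ψ (x 0) (u 0)) * h12 + h02
    have h1eq : ψ (x 1) (u 1) = ε := by
      linear_combination (ψ (x 0) (u 0)) * h12 - (ψ (x 1) (u 1)) * h02
    have main : ∀ p w : V, ε * ψ p w = φ p w := by
      intro p w
      have δ00 : φ (x 0) (u 0) = 1 := by rw [hδ]; simp
      have δ11 : φ (x 1) (u 1) = 1 := by rw [hδ]; simp
      have δ10 : φ (x 1) (u 0) = 0 := by rw [hδ]; simp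
      have G0 : ψ p w * ε - ψ p (u 0) * (ε * φ (x 0) w)
          = φ p w - φ p (u 0) * φ (x 0) w := by
        have E := H' p (x 0) (u 0) w
        rw [hline 0 w, δ00, ← hε] at E
        linear_combination E
      have G1 : ε * ψ p (u 0) = φ p (u 0) := by
        have E := H' p (x 1) (u 1) (u 0)
        rw [hline 1 (u 0), h1eq, δ11, δ10] at E
        linear_combination E
      linear_combination G0 + (φ (x 0) w) * G1
    rcases mul_self_eq_one_iff.mp hee with h1 | h1
    · left
      intro p q
      have hm := main p q
      rw [h1, one_mul] at hm
      exact hm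
    · right
      intro p q
      have hm := main p q
      rw [h1] at hm
      have : ψ p q = φ (A p) (A q) := rfl
      linarith [hm]
  · rintro (h | h) x y z w <;> simp only [canACT, h] <;> ring
end

section
/- If φ is a nondegenerate symmetric bilinear form of rank ≥ 3 on V whose signature (p,q) satisfies p ≠ q, then every A ∈ GL(V) with A*R_φ = R_φ satisfies A*φ = φ; that is, the structure group of R_φ equals the isometry group of φ. -/
open Module Finset

theorem exists_forall_eq_of_mul_eq_one {M₀ : Type*} [MonoidWithZero M₀] [IsRightCancelMulZero M₀]
    [Nontrivial M₀] {ι : Type*} [Nonempty ι] (h3 : ∀ a b : ι, ∃ c, c ≠ a ∧ c ≠ b) {r : ι → M₀}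
    (hr : ∀ i j, i ≠ j → r i * r j = 1) :
    ∃ c, c * c = 1 ∧ ∀ i, r i = c := by
  have hconst : ∀ i j, r i = r j := by
    intro i j
    by_cases hij : i = j
    · rw [hij]
    obtain ⟨k, hki, hkj⟩ := h3 i j
    have hk : r k ≠ 0 := left_ne_zero_of_mul_eq_one (hr k i hki)
    exact mul_right_cancel₀ hk ((hr i k (Ne.symm hki)).trans (hr j k (Ne.symm hkj)).symm)
  obtain ⟨i⟩ := ‹Nonempty ι›
  obtain ⟨j, hji, -⟩ := h3 i i
  exact ⟨r i, by simpa [hconst j i] using hr i j (Ne.symm hji), fun k => hconst k i⟩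

section Rigidity

variable {V : Type*} [AddCommGroup V] [Module ℝ V] {ι : Type*} [DecidableEq ι]
  {φ ψ : LinearMap.BilinForm ℝ V} {e : ι → V} {ε : ι → ℝ}

theorem diag_mul_diag_sub_sq_of_canACT_eq
    (horth : ∀ i j, φ (e i) (e j) = if i = j then ε i else 0) (hψ : ∀ x y, ψ x y = ψ y x)
    (hR : ∀ x y z w, canACT ψ x y z w = canACT φ x y z w) {i j : ι} (hij : i ≠ j) :
    ψ (e i) (e i) * ψ (e j) (e j) - ψ (e i) (e j) ^ 2 = ε i * ε j := by
  have h := hR (e i) (e j) (e j) (e i)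
  simp only [canACT, horth, hij, hij.symm, if_true, if_false, hψ (e j) (e i)] at h
  linear_combination h

theorem diag_mul_apply_of_canACT_eq
    (horth : ∀ i j, φ (e i) (e j) = if i = j then ε i else 0) (hψ : ∀ x y, ψ x y = ψ y x)
    (hR : ∀ x y z w, canACT ψ x y z w = canACT φ x y z w) (i : ι) {j k : ι} (hjk : j ≠ k) :
    ψ (e i) (e i) * ψ (e j) (e k) = ψ (e i) (e j) * ψ (e i) (e k) := by
  have h := hR (e i) (e j) (e k) (e i)
  by_cases hij : i = j
  · subst hij; ring
  · simp only [canACT, horth, hjk, Ne.symm hij, if_false, mul_zero, sub_zero,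
      hψ (e j) (e i)] at h
    linear_combination h

theorem apply_eq_zero_of_canACT_eq (hε : ∀ i, ε i ≠ 0)
    (horth : ∀ i j, φ (e i) (e j) = if i = j then ε i else 0) (hψ : ∀ x y, ψ x y = ψ y x)
    (hR : ∀ x y z w, canACT ψ x y z w = canACT φ x y z w) {a b c : ι} (hab : a ≠ b)
    (hca : c ≠ a) (hcb : c ≠ b) : ψ (e a) (e b) = 0 := by
  have hrel_a := diag_mul_apply_of_canACT_eq horth hψ hR a (Ne.symm hcb)
  have hrel_b := diag_mul_apply_of_canACT_eq horth hψ hR b (Ne.symm hca)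
  have hrel_c := diag_mul_apply_of_canACT_eq horth hψ hR c hab
  rw [hψ (e b) (e a)] at hrel_b
  rw [hψ (e c) (e a), hψ (e c) (e b)] at hrel_c
  -- the two relations at `a` and `b` multiply to `ψ_ac ψ_bc (ψ_aa ψ_bb - ψ_ab²) = 0`
  have hacbc : ψ (e a) (e c) * ψ (e b) (e c) = 0 := by
    have h := diag_mul_diag_sub_sq_of_canACT_eq horth hψ hR hab
    have : ψ (e a) (e c) * ψ (e b) (e c) * (ε a * ε b) = 0 := by
      rw [← h]
      linear_combination ψ (e b) (e b) * ψ (e a) (e c) * hrel_a +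
        ψ (e a) (e b) * ψ (e a) (e c) * hrel_b
    simpa [hε] using this
  by_contra hψab
  have hcc : ψ (e c) (e c) = 0 := by
    simpa [hψab, hacbc] using hrel_c
  have hac := diag_mul_diag_sub_sq_of_canACT_eq horth hψ hR (Ne.symm hca)
  have hbc := diag_mul_diag_sub_sq_of_canACT_eq horth hψ hR (Ne.symm hcb)
  have : ε a * ε c * (ε b * ε c) = 0 := by
    rw [← hac, ← hbc, hcc]; linear_combination (ψ (e a) (e c) * ψ (e b) (e c)) * hacbc
  simp [hε] at this

theorem diag_mul_diag_of_canACT_eq (hε : ∀ i, ε i ≠ 0)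
    (horth : ∀ i j, φ (e i) (e j) = if i = j then ε i else 0) (hψ : ∀ x y, ψ x y = ψ y x)
    (hR : ∀ x y z w, canACT ψ x y z w = canACT φ x y z w)
    (h3 : ∀ a b : ι, ∃ c, c ≠ a ∧ c ≠ b) {i j : ι} (hij : i ≠ j) :
    ψ (e i) (e i) * ψ (e j) (e j) = ε i * ε j := by
  obtain ⟨k, hki, hkj⟩ := h3 i j
  have h := diag_mul_diag_sub_sq_of_canACT_eq horth hψ hR hij
  rwa [apply_eq_zero_of_canACT_eq hε horth hψ hR hij hki hkj, zero_pow two_ne_zero,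
    sub_zero] at h

end Rigidity

theorem eq_or_eq_neg_of_canACT_eq {V : Type*} [AddCommGroup V] [Module ℝ V] {ι : Type*}
    [Fintype ι] [DecidableEq ι] {φ ψ : LinearMap.BilinForm ℝ V} (hι : 3 ≤ Fintype.card ι)
    (e : Basis ι ℝ V) {ε : ι → ℝ} (hε : ∀ i, ε i ≠ 0)
    (horth : ∀ i j, φ (e i) (e j) = if i = j then ε i else 0) (hψ : ∀ x y, ψ x y = ψ y x)
    (hR : ∀ x y z w, canACT ψ x y z w = canACT φ x y z w) :
    ψ = φ ∨ ψ = -φ := by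
  have h3 : ∀ a b : ι, ∃ c, c ≠ a ∧ c ≠ b :=
    Cardinal.exists_ne_ne_of_three_le (by simpa using hι)
  have : Nonempty ι := Fintype.card_pos_iff.mp (by omega)
  obtain ⟨c, hc, hdiag⟩ :=
    exists_forall_eq_of_mul_eq_one h3 (r := fun i => ψ (e i) (e i) / ε i) fun i j hij => by
      rw [div_mul_div_comm, diag_mul_diag_of_canACT_eq hε horth hψ hR h3 hij,
        div_self (mul_ne_zero (hε i) (hε j))]
  have hψφ : ψ = c • φ := by
    refine e.ext fun i => e.ext fun j => ?_
    by_cases hij : i = j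
    · subst hij
      simp [horth, ← hdiag i, hε i]
    · obtain ⟨k, hki, hkj⟩ := h3 i j
      simp [horth, hij, apply_eq_zero_of_canACT_eq hε horth hψ hR hij hki hkj]
  rcases mul_self_eq_one_iff.mp hc with rfl | rfl
  · exact .inl (hψφ.trans (one_smul ℝ φ))
  · exact .inr (hψφ.trans (neg_one_smul ℝ φ))

section Signature

variable {V : Type*} [AddCommGroup V] [Module ℝ V]

theorem pos_of_mem_span_orthonormal (β : LinearMap.BilinForm ℝ V) {κ : Type*} [Fintype κ]
    [DecidableEq κ] {u : κ → V} (hu : ∀ i j, β (u i) (u j) = if i = j then 1 else 0) {x : V}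
    (hx : x ∈ Submodule.span ℝ (Set.range u)) (hx0 : x ≠ 0) : 0 < β x x := by
  obtain ⟨c, rfl⟩ := (Submodule.mem_span_range_iff_exists_fun ℝ).mp hx
  obtain ⟨i, hi⟩ : ∃ i, c i ≠ 0 := by
    by_contra! h
    simp [h] at hx0
  have hβ : β (∑ i, c i • u i) (∑ i, c i • u i) = ∑ i, c i ^ 2 := by
    simp [map_sum, hu, sq]
  rw [hβ]
  exact sum_pos' (fun i _ => sq_nonneg (c i)) ⟨i, mem_univ i, by positivity⟩

theorem two_mul_finrank_le_of_apply_neg [FiniteDimensional ℝ V] (β : LinearMap.BilinForm ℝ V)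
    (A : V ≃ₗ[ℝ] V) (hA : ∀ x, β (A x) (A x) = -β x x) (W : Submodule ℝ V)
    (hW : ∀ x ∈ W, x ≠ 0 → 0 < β x x) : 2 * finrank ℝ W ≤ finrank ℝ V := by
  have hdisj : Disjoint W (W.map (A : V →ₗ[ℝ] V)) := by
    rw [Submodule.disjoint_def]
    rintro _ hx ⟨y, hy, rfl⟩
    by_contra hx0
    have hy0 : y ≠ 0 := by rintro rfl; simp at hx0
    have := hW _ hx hx0
    rw [LinearEquiv.coe_coe, hA] at this
    linarith [hW y hy hy0]
  have := Submodule.finrank_add_finrank_le_of_disjoint hdisj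
  rw [LinearEquiv.finrank_map_eq] at this
  omega

theorem card_eq_card_of_apply_neg [FiniteDimensional ℝ V] {φ : LinearMap.BilinForm ℝ V}
    {ι : Type*} [Fintype ι] [DecidableEq ι] (e : Basis ι ℝ V) {ε : ι → ℝ}
    (hε : ∀ i, ε i = 1 ∨ ε i = -1) (horth : ∀ i j, φ (e i) (e j) = if i = j then ε i else 0)
    (A : V ≃ₗ[ℝ] V) (hA : ∀ x, φ (A x) (A x) = -φ x x) :
    (univ.filter fun i => ε i = 1).card = (univ.filter fun i => ε i = -1).card := by
  have half : ∀ s : ℝ, s * s = 1 → 2 * (univ.filter fun i => ε i = s).card ≤ Fintype.card ι := by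
    intro s hs
    -- `s • φ` is positive definite on the span of the `eᵢ` with `εᵢ = s`, and `A` reverses it
    let u : {i // ε i = s} → V := fun i => e i
    have hu : LinearIndependent ℝ u := e.linearIndependent.comp _ Subtype.val_injective
    have horth_u : ∀ i j, (s • φ) (u i) (u j) = if i = j then 1 else 0 := by
      intro i j
      by_cases hij : i = j
      · simp [u, horth, hij, j.2, hs]
      · simp [u, horth, hij, Subtype.val_injective.ne hij]
    have := two_mul_finrank_le_of_apply_neg (s • φ) A (by simp [hA])
      (Submodule.span ℝ (Set.range u)) fun x hx hx0 =>
        pos_of_mem_span_orthonormal (s • φ) horth_u hx hx0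
    rwa [finrank_span_eq_card hu, Fintype.card_subtype, finrank_eq_card_basis e] at this
  have hpart : (univ.filter fun i => ε i = 1).card + (univ.filter fun i => ε i = -1).card =
      Fintype.card ι := by
    rw [← card_univ, ← card_filter_add_card_filter_not (s := univ) fun i => ε i = 1]
    congr 2
    refine filter_congr fun i _ => ?_
    rcases hε i with h | h <;> norm_num [h]
  have := half 1 (by norm_num)
  have := half (-1) (by norm_num)
  omega

end Signature

theorem stmt6_general {V : Type*} [AddCommGroup V] [Module ℝ V] [FiniteDimensional ℝ V]
    (φ : LinearMap.BilinForm ℝ V) (hsymm : ∀ x y : V, φ x y = φ y x)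
    (hdim : 3 ≤ Module.finrank ℝ V)
    -- an orthonormal basis realizing the signature (p, q)
    (n : ℕ) (e : Module.Basis (Fin n) ℝ V) (ε : Fin n → ℝ)
    (hε : ∀ i, ε i = 1 ∨ ε i = -1)
    (horth : ∀ i j, φ (e i) (e j) = if i = j then ε i else 0)
    -- p ≠ q :
    (hsig : (Finset.univ.filter fun i => ε i = 1).card ≠
            (Finset.univ.filter fun i => ε i = -1).card)
    (A : V ≃ₗ[ℝ] V)
    (hA : ∀ x y z w : V, canACT φ (A x) (A y) (A z) (A w) = canACT φ x y z w) :
    ∀ x y : V, φ (A x) (A y) = φ x y := by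
  let ψ := φ.compl₁₂ (A : V →ₗ[ℝ] V) (A : V →ₗ[ℝ] V)
  have hn : 3 ≤ Fintype.card (Fin n) := by rwa [← finrank_eq_card_basis e]
  have hε0 : ∀ i, ε i ≠ 0 := fun i => by rcases hε i with h | h <;> simp [h]
  rcases eq_or_eq_neg_of_canACT_eq (ψ := ψ) hn e hε0 horth (fun x y => hsymm (A x) (A y)) hA
    with h | h
  · exact fun x y => LinearMap.congr_fun₂ h x y
  · exact (hsig (card_eq_card_of_apply_neg e hε horth A fun x => LinearMap.congr_fun₂ h x x)).elim

theorem stmt6 {V : Type*} [AddCommGroup V] [Module ℝ V] [FiniteDimensional ℝ V]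
    (φ : LinearMap.BilinForm ℝ V) (hsymm : ∀ x y : V, φ x y = φ y x)
    (hnd : φ.Nondegenerate)
    (hdim : 3 ≤ Module.finrank ℝ V)
    -- an orthonormal basis realizing the signature (p, q)
    (n : ℕ) (e : Module.Basis (Fin n) ℝ V) (ε : Fin n → ℝ)
    (hε : ∀ i, ε i = 1 ∨ ε i = -1)
    (horth : ∀ i j, φ (e i) (e j) = if i = j then ε i else 0)
    -- p ≠ q :
    (hsig : (Finset.univ.filter fun i => ε i = 1).card ≠
            (Finset.univ.filter fun i => ε i = -1).card)
    (A : V ≃ₗ[ℝ] V)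
    (hA : ∀ x y z w : V, canACT φ (A x) (A y) (A z) (A w) = canACT φ x y z w) :
    ∀ x y : V, φ (A x) (A y) = φ x y :=
  stmt6_general φ hsymm hdim n e ε hε horth hsig A hA
end

section
/- If V is a 2-dimensional real vector space and φ is a symmetric bilinear form of rank 2 on V, then an invertible linear map A satisfies A*R_φ = R_φ if and only if det A = ±1. -/
/-!
In dimension 2, `R_φ(x, y, z, w)` is a multiple of `det(x, y) · det(z, w)`, the factor being
minus the Gram determinant of `φ`, which is nonzero exactly when `φ` is nondegenerate. Since `det(Ax, Ay) = det A · det(x, y)`, pulling back by `A` multiplies `R_φ` by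
`(det A)²`, so `A` preserves `R_φ` iff `(det A)² = 1`.
-/

open LinearMap (BilinForm)

section
variable {V : Type*} [AddCommGroup V] [Module ℝ V]

theorem canACT_eq_neg_det_mul_det_mul_det (φ : BilinForm ℝ V) (b : Module.Basis (Fin 2) ℝ V)
    (x y z w : V) :
    canACT φ x y z w = -(LinearMap.BilinForm.toMatrix b φ).det * b.det ![x, y] * b.det ![z, w] := by
  conv_lhs => rw [← b.sum_repr x, ← b.sum_repr y, ← b.sum_repr z, ← b.sum_repr w]
  simp only [canACT, Fin.sum_univ_two, map_add, map_smul, LinearMap.add_apply,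
    LinearMap.smul_apply, smul_eq_mul, Module.Basis.det_apply, Matrix.det_fin_two,
    Module.Basis.toMatrix_apply, LinearMap.BilinForm.toMatrix_apply, Matrix.cons_val_zero,
    Matrix.cons_val_one]
  ring

variable [FiniteDimensional ℝ V]

theorem canACT_map (hdim : Module.finrank ℝ V = 2) (φ : BilinForm ℝ V) (f : V →ₗ[ℝ] V)
    (x y z w : V) :
    canACT φ (f x) (f y) (f z) (f w) = LinearMap.det f ^ 2 * canACT φ x y z w := by
  let b := Module.finBasisOfFinrankEq ℝ V hdim
  have hpair : ∀ u v : V, b.det ![f u, f v] = LinearMap.det f * b.det ![u, v] := fun u v => by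
    rw [← b.det_comp, ← FinVec.map_eq]; rfl
  simp only [canACT_eq_neg_det_mul_det_mul_det φ b, hpair]
  ring

theorem exists_canACT_ne_zero (hdim : Module.finrank ℝ V = 2) {φ : BilinForm ℝ V}
    (hφ : φ.Nondegenerate) : ∃ x y z w : V, canACT φ x y z w ≠ 0 := by
  let b := Module.finBasisOfFinrankEq ℝ V hdim
  refine ⟨b 0, b 1, b 0, b 1, ?_⟩
  have hb : b.det ![b 0, b 1] = 1 := by
    rw [← b.det_self]; congr 1; ext i; fin_cases i <;> rfl
  rw [canACT_eq_neg_det_mul_det_mul_det φ b, hb, mul_one, mul_one, neg_ne_zero]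
  exact (hφ.toMatrix b).det_ne_zero
end

theorem stmt7_general {V : Type*} [AddCommGroup V] [Module ℝ V] [FiniteDimensional ℝ V]
    (hdim : Module.finrank ℝ V = 2)
    (φ : LinearMap.BilinForm ℝ V)
    (hnd : φ.Nondegenerate)  -- rank φ = 2
    (A : V ≃ₗ[ℝ] V) :
    (∀ x y z w : V, canACT φ (A x) (A y) (A z) (A w) = canACT φ x y z w) ↔
      (LinearMap.det (A : V →ₗ[ℝ] V) = 1 ∨ LinearMap.det (A : V →ₗ[ℝ] V) = -1) := by
  rw [← sq_eq_one_iff]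
  have hmap := canACT_map hdim φ (A : V →ₗ[ℝ] V)
  simp only [LinearEquiv.coe_coe] at hmap
  simp only [hmap]
  obtain ⟨x, y, z, w, hR⟩ := exists_canACT_ne_zero hdim hnd
  refine ⟨fun h => ?_, fun h _ _ _ _ => by rw [h, one_mul]⟩
  simpa [hR] using h x y z w

theorem stmt7 {V : Type*} [AddCommGroup V] [Module ℝ V] [FiniteDimensional ℝ V]
    (hdim : Module.finrank ℝ V = 2)
    (φ : LinearMap.BilinForm ℝ V) (hsymm : ∀ x y : V, φ x y = φ y x)
    (hnd : φ.Nondegenerate)  -- rank φ = 2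
    (A : V ≃ₗ[ℝ] V) :
    (∀ x y z w : V, canACT φ (A x) (A y) (A z) (A w) = canACT φ x y z w) ↔
      (LinearMap.det (A : V →ₗ[ℝ] V) = 1 ∨ LinearMap.det (A : V →ₗ[ℝ] V) = -1) :=
  stmt7_general hdim φ hnd A
end

section
/- Let (V,R) = ⊕_{s=1}^k (V_s, R_{φ_s}) with each φ_s nondegenerate of signature (p_s,q_s). If A ∈ G_R maps Vᵢ onto Vⱼ and rank φᵢ ≥ 3, then the signature (pᵢ,qᵢ) equals (pⱼ,qⱼ) or (qⱼ,pⱼ). -/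
namespace Matrix

variable {ι : Type*}

/-- For the Gram matrix `Ψ` of a form `φ` in a family `e`, these are the values
`canACT φ (e a) (e b) (e c) (e d)`. -/
def curvature (Ψ : Matrix ι ι ℝ) (a b c d : ι) : ℝ :=
  Ψ a d * Ψ b c - Ψ a c * Ψ b d

variable [DecidableEq ι] {Ψ : Matrix ι ι ℝ} {d : ι → ℝ}

theorem diag_mul_diag_sub_mul_self_of_curvature_eq (hΨ : Ψ.IsSymm)
    (hR : Ψ.curvature = (diagonal d).curvature) {a b : ι} (hab : a ≠ b) :
    Ψ a a * Ψ b b - Ψ a b * Ψ a b = d a * d b := by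
  have h := congrFun (congrFun (congrFun (congrFun hR a) b) b) a
  simp only [curvature, diagonal_apply, hab, hab.symm, if_true, if_false, hΨ.apply] at h
  linarith

theorem diag_mul_apply_of_curvature_eq (hΨ : Ψ.IsSymm)
    (hR : Ψ.curvature = (diagonal d).curvature) {a b c : ι}
    (hab : a ≠ b) (hac : a ≠ c) (hbc : b ≠ c) :
    Ψ a a * Ψ b c = Ψ a c * Ψ a b := by
  have h := congrFun (congrFun (congrFun (congrFun hR a) b) c) a
  simp only [curvature, diagonal_apply, hac, hbc, hab.symm, if_true, if_false,
    hΨ.apply a b] at h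
  linarith

theorem diag_ne_zero_of_curvature_eq (hΨ : Ψ.IsSymm)
    (hR : Ψ.curvature = (diagonal d).curvature) (hd : ∀ a, d a ≠ 0) (h3 : 3 ≤ ENat.card ι)
    (a : ι) : Ψ a a ≠ 0 := by
  intro ha
  obtain ⟨b, hba, -⟩ := ENat.exists_ne_ne_of_three_le h3 a a
  obtain ⟨c, hca, hcb⟩ := ENat.exists_ne_ne_of_three_le h3 a b
  have hab := diag_mul_diag_sub_mul_self_of_curvature_eq hΨ hR hba.symm
  have hac := diag_mul_diag_sub_mul_self_of_curvature_eq hΨ hR hca.symm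
  have habc := diag_mul_apply_of_curvature_eq hΨ hR hba.symm hca.symm hcb.symm
  rw [ha, zero_mul] at hab hac habc
  have hab0 : Ψ a b ≠ 0 := fun h ↦ mul_ne_zero (hd a) (hd b) (by simpa [h] using hab.symm)
  have hac0 : Ψ a c ≠ 0 := fun h ↦ mul_ne_zero (hd a) (hd c) (by simpa [h] using hac.symm)
  exact mul_ne_zero hac0 hab0 habc.symm

theorem apply_eq_zero_of_curvature_eq (hΨ : Ψ.IsSymm)
    (hR : Ψ.curvature = (diagonal d).curvature) (hd : ∀ a, d a ≠ 0) (h3 : 3 ≤ ENat.card ι)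
    {a b : ι} (hab : a ≠ b) : Ψ a b = 0 := by
  obtain ⟨c, hca, hcb⟩ := ENat.exists_ne_ne_of_three_le h3 a b
  have ha := diag_mul_apply_of_curvature_eq hΨ hR hab hca.symm hcb.symm
  have hb := diag_mul_apply_of_curvature_eq hΨ hR hab.symm hcb.symm hca.symm
  have hc := diag_mul_apply_of_curvature_eq hΨ hR hca hcb hab
  have hdet := diag_mul_diag_sub_mul_self_of_curvature_eq hΨ hR hab
  rw [hΨ.apply a b] at hb
  rw [hΨ.apply a c, hΨ.apply b c] at hc
  -- `Ψ a a * Ψ b b - Ψ a b * Ψ a b = d a * d b` is nonzero, so the three relations force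
  -- `Ψ a c * Ψ b c = 0`
  have hprod : (Ψ a a * Ψ b b - Ψ a b * Ψ a b) * (Ψ a c * Ψ b c) = 0 := by
    linear_combination (Ψ b b * Ψ a c) * ha + (Ψ a c * Ψ a b) * hb
  rw [hdet] at hprod
  have hc0 : Ψ c c * Ψ a b = 0 := by
    rw [hc, mul_comm]
    exact (mul_eq_zero.1 hprod).resolve_left (mul_ne_zero (hd a) (hd b))
  exact (mul_eq_zero.1 hc0).resolve_left (diag_ne_zero_of_curvature_eq hΨ hR hd h3 c)

theorem diag_mul_diag_of_curvature_eq (hΨ : Ψ.IsSymm)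
    (hR : Ψ.curvature = (diagonal d).curvature) (hd : ∀ a, d a ≠ 0) (h3 : 3 ≤ ENat.card ι)
    {a b : ι} (hab : a ≠ b) : Ψ a a * Ψ b b = d a * d b := by
  simpa [apply_eq_zero_of_curvature_eq hΨ hR hd h3 hab] using
    diag_mul_diag_sub_mul_self_of_curvature_eq hΨ hR hab

theorem eq_smul_diagonal_of_curvature_eq (hΨ : Ψ.IsSymm)
    (hR : Ψ.curvature = (diagonal d).curvature) (hd : ∀ a, d a ≠ 0) (h3 : 3 ≤ ENat.card ι)
    (a₀ : ι) : Ψ = (Ψ a₀ a₀ / d a₀) • diagonal d := by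
  have hdiag (a : ι) : Ψ a a = Ψ a₀ a₀ / d a₀ * d a := by
    obtain ⟨c, hca, hca₀⟩ := ENat.exists_ne_ne_of_three_le h3 a a₀
    have hac := diag_mul_diag_of_curvature_eq hΨ hR hd h3 hca.symm
    have ha₀c := diag_mul_diag_of_curvature_eq hΨ hR hd h3 hca₀.symm
    have hc := diag_ne_zero_of_curvature_eq hΨ hR hd h3 c
    rw [div_mul_eq_mul_div, eq_div_iff (hd a₀)]
    apply mul_right_cancel₀ hc
    linear_combination d a₀ * hac - d a * ha₀c
  ext a b
  rcases eq_or_ne a b with rfl | hab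
  · simp [hdiag a]
  · simp [apply_eq_zero_of_curvature_eq hΨ hR hd h3 hab, hab]

theorem eq_diagonal_or_eq_neg_of_curvature_eq (hΨ : Ψ.IsSymm)
    (hR : Ψ.curvature = (diagonal d).curvature) (hd : ∀ a, d a ≠ 0) (h3 : 3 ≤ ENat.card ι) :
    Ψ = diagonal d ∨ Ψ = -diagonal d := by
  obtain ⟨a⟩ : Nonempty ι :=
    (ENat.card_ne_zero_iff_nonempty ι).1 fun h ↦ by simp [h] at h3
  obtain ⟨σ, hσ⟩ : ∃ σ : ℝ, Ψ = σ • diagonal d :=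
    ⟨_, eq_smul_diagonal_of_curvature_eq hΨ hR hd h3 a⟩
  obtain ⟨b, hba, -⟩ := ENat.exists_ne_ne_of_three_le h3 a a
  have hab := diag_mul_diag_of_curvature_eq hΨ hR hd h3 hba.symm
  simp only [hσ, smul_apply, diagonal_apply_eq, smul_eq_mul] at hab
  have hσσ : σ * σ = 1 := by
    apply mul_right_cancel₀ (mul_ne_zero (hd a) (hd b))
    linear_combination hab
  rcases mul_self_eq_one_iff.1 hσσ with h | h
  · exact .inl (by rw [hσ, h, one_smul])
  · exact .inr (by rw [hσ, h, neg_one_smul])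

end Matrix

open LinearMap (BilinForm)
open Module (Basis)

namespace LinearMap.BilinForm

variable {W : Type*} [AddCommGroup W] [Module ℝ W] {ι : Type*}

theorem eq_or_eq_neg_of_canACT_eq {φ ψ : BilinForm ℝ W} (hψ : ψ.IsSymm) (e : Basis ι ℝ W)
    (he : φ.iIsOrtho e) (he₀ : ∀ a, φ (e a) (e a) ≠ 0) (hrank : 3 ≤ Module.finrank ℝ W)
    (h : ∀ x y z w, canACT ψ x y z w = canACT φ x y z w) : ψ = φ ∨ ψ = -φ := by
  classical
  have : Module.Finite ℝ W := Module.finite_of_finrank_pos (by omega)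
  have : Finite ι := Module.Finite.finite_basis e
  have h3 : 3 ≤ ENat.card ι := by
    rw [ENat.card_eq_coe_natCard, ← Module.finrank_eq_nat_card_basis e]
    exact_mod_cast hrank
  let D : Matrix ι ι ℝ := Matrix.diagonal fun a ↦ φ (e a) (e a)
  have hφ (a b : ι) : φ (e a) (e b) = D a b := by
    rcases eq_or_ne a b with rfl | hab
    · simp [D]
    · simp [D, iIsOrtho_def.1 he a b hab, hab]
  let Ψ : Matrix ι ι ℝ := Matrix.of fun a b ↦ ψ (e a) (e b)
  have hΨ : Ψ.IsSymm := Matrix.IsSymm.ext fun a b ↦ hψ.eq (e b) (e a)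
  have hR : Ψ.curvature = D.curvature := by
    ext a b c d
    have := h (e a) (e b) (e c) (e d)
    rwa [canACT, canACT, hφ, hφ, hφ, hφ] at this
  refine (Matrix.eq_diagonal_or_eq_neg_of_curvature_eq hΨ hR he₀ h3).imp
    (fun hΨD ↦ ext_basis e fun a b ↦ ?_) (fun hΨD ↦ ext_basis e fun a b ↦ ?_)
  · rw [hφ]; exact congrFun (congrFun hΨD a) b
  · rw [LinearMap.neg_apply, LinearMap.neg_apply, hφ]; exact congrFun (congrFun hΨD a) b

theorem iIsOrtho_of_apply_eq_ite [DecidableEq ι] {ε : ι → ℝ} {B : BilinForm ℝ W} {e : Basis ι ℝ W}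
    (he : ∀ a b, B (e a) (e b) = if a = b then ε a else 0) : B.iIsOrtho e :=
  fun a b hab ↦ by simpa [hab] using he a b

variable [Fintype ι] {B : BilinForm ℝ W}

theorem toQuadraticMap_equivalent_weightedSumSquares (e : Basis ι ℝ W) (he : B.iIsOrtho e) :
    B.toQuadraticMap.Equivalent (QuadraticMap.weightedSumSquares ℝ fun a ↦ B (e a) (e a)) := by
  have horth : (QuadraticMap.associated B.toQuadraticMap).IsOrthoᵢ e := fun a b hab ↦ by
    simp [Function.onFun, QuadraticMap.associated_toQuadraticMap, iIsOrtho_def.1 he a b hab,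
      iIsOrtho_def.1 he b a hab.symm]
  have e' := QuadraticMap.isometryEquivBasisRepr B.toQuadraticMap e
  rw [QuadraticMap.basisRepr_eq_of_iIsOrtho _ _ horth] at e'
  exact ⟨e'⟩

theorem sigPos_toQuadraticMap_eq_card [DecidableEq ι] {ε : ι → ℝ} (hε : ∀ a, ε a = 1 ∨ ε a = -1)
    (e : Basis ι ℝ W) (he : ∀ a b, B (e a) (e b) = if a = b then ε a else 0) :
    sigPos B.toQuadraticMap = (Finset.univ.filter fun a ↦ ε a = 1).card := by
  rw [QuadraticForm.sigPos_of_equiv_weightedSumSquares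
    (toQuadraticMap_equivalent_weightedSumSquares e (iIsOrtho_of_apply_eq_ite he)),
    ← Set.ncard_coe_finset]
  congr 1
  ext a
  rcases hε a with h | h <;> norm_num [he, h]

theorem sigNeg_toQuadraticMap_eq_card [DecidableEq ι] {ε : ι → ℝ} (hε : ∀ a, ε a = 1 ∨ ε a = -1)
    (e : Basis ι ℝ W) (he : ∀ a b, B (e a) (e b) = if a = b then ε a else 0) :
    sigNeg B.toQuadraticMap = (Finset.univ.filter fun a ↦ ε a = -1).card := by
  rw [QuadraticForm.sigNeg_of_equiv_weightedSumSquares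
    (toQuadraticMap_equivalent_weightedSumSquares e (iIsOrtho_of_apply_eq_ite he)),
    ← Set.ncard_coe_finset]
  congr 1
  ext a
  rcases hε a with h | h <;> norm_num [he, h]

end LinearMap.BilinForm

open LinearMap.BilinForm

theorem stmt13_general {V : Type*} [AddCommGroup V] [Module ℝ V]
    (k : ℕ) (Vs : Fin k → Submodule ℝ V)
    (φs : Fin k → LinearMap.BilinForm ℝ V)
    (hsymm : ∀ s, ∀ x y : V, φs s x y = φs s y x)
    (R : V →ₗ[ℝ] V →ₗ[ℝ] V →ₗ[ℝ] V →ₗ[ℝ] ℝ)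
    (hRs : ∀ s, ∀ x ∈ Vs s, ∀ y ∈ Vs s, ∀ z ∈ Vs s, ∀ w ∈ Vs s,
      R x y z w = canACT (φs s) x y z w)
    (A : V ≃ₗ[ℝ] V)
    (hA : ∀ x y z w : V, R (A x) (A y) (A z) (A w) = R x y z w)
    (i j : Fin k)
    (hAij : Submodule.map (A : V →ₗ[ℝ] V) (Vs i) = Vs j)
    -- rank φ_i ≥ 3:
    (hrank : 3 ≤ Module.finrank ℝ (Vs i))
    -- orthonormal bases realizing the signatures (p_i, q_i) and (p_j, q_j):
    (ni nj : ℕ)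
    (ei : Module.Basis (Fin ni) ℝ (Vs i)) (εi : Fin ni → ℝ)
    (hεi : ∀ a, εi a = 1 ∨ εi a = -1)
    (horthi : ∀ a b, φs i (ei a : V) (ei b : V) = if a = b then εi a else 0)
    (ej : Module.Basis (Fin nj) ℝ (Vs j)) (εj : Fin nj → ℝ)
    (hεj : ∀ a, εj a = 1 ∨ εj a = -1)
    (horthj : ∀ a b, φs j (ej a : V) (ej b : V) = if a = b then εj a else 0) :
    ((Finset.univ.filter fun a => εi a = 1).card =
        (Finset.univ.filter fun a => εj a = 1).card ∧
      (Finset.univ.filter fun a => εi a = -1).card =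
        (Finset.univ.filter fun a => εj a = -1).card) ∨
    ((Finset.univ.filter fun a => εi a = 1).card =
        (Finset.univ.filter fun a => εj a = -1).card ∧
      (Finset.univ.filter fun a => εi a = -1).card =
        (Finset.univ.filter fun a => εj a = 1).card) := by
  let Ai : Vs i ≃ₗ[ℝ] Vs j := A.ofSubmodules (Vs i) (Vs j) hAij
  let φi := (φs i).restrict (Vs i)
  let φj := (φs j).restrict (Vs j)
  let ψ : BilinForm ℝ (Vs i) := φj.compl₁₂ Ai.toLinearMap Ai.toLinearMap
  have hA_mem (x : Vs i) : A x ∈ Vs j := (Ai x).2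
  have hψ : ψ = φi ∨ ψ = -φi := by
    refine eq_or_eq_neg_of_canACT_eq ⟨fun x y ↦ hsymm j _ _⟩ ei
      (iIsOrtho_of_apply_eq_ite horthi) (fun a ↦ ?_) hrank fun x y z w ↦ ?_
    · show φs i (ei a) (ei a) ≠ 0
      rw [horthi, if_pos rfl]
      rcases hεi a with h | h <;> norm_num [h]
    · calc canACT ψ x y z w = R (A x) (A y) (A z) (A w) :=
            (hRs j _ (hA_mem x) _ (hA_mem y) _ (hA_mem z) _ (hA_mem w)).symm
        _ = R x y z w := hA x y z w
        _ = canACT φi x y z w := hRs i _ x.2 _ y.2 _ z.2 _ w.2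
  have hQ : ψ.toQuadraticMap.Equivalent φj.toQuadraticMap :=
    ⟨(QuadraticMap.isometryEquivOfCompLinearEquiv φj.toQuadraticMap Ai).symm⟩
  have hposi := sigPos_toQuadraticMap_eq_card (B := φi) hεi ei horthi
  have hnegi := sigNeg_toQuadraticMap_eq_card (B := φi) hεi ei horthi
  have hposj := sigPos_toQuadraticMap_eq_card (B := φj) hεj ej horthj
  have hnegj := sigNeg_toQuadraticMap_eq_card (B := φj) hεj ej horthj
  rw [← hposi, ← hnegi, ← hposj, ← hnegj]
  rcases hψ with h | h <;> rw [h] at hQ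
  · exact .inl ⟨hQ.sigPos_eq, hQ.sigNeg_eq⟩
  · rw [LinearMap.BilinMap.toQuadraticMap_neg] at hQ
    have hpos := hQ.sigPos_eq
    have hneg := hQ.sigNeg_eq
    rw [sigPos_neg] at hpos
    rw [sigNeg_neg] at hneg
    exact .inr ⟨hneg, hpos⟩

theorem stmt13 {V : Type*} [AddCommGroup V] [Module ℝ V] [FiniteDimensional ℝ V]
    (k : ℕ) (Vs : Fin k → Submodule ℝ V) (hint : DirectSum.IsInternal Vs)
    (φs : Fin k → LinearMap.BilinForm ℝ V)
    (hsymm : ∀ s, ∀ x y : V, φs s x y = φs s y x)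
    (hnd : ∀ s, ∀ v ∈ Vs s, (∀ w ∈ Vs s, φs s v w = 0) → v = 0)
    (R : V →ₗ[ℝ] V →ₗ[ℝ] V →ₗ[ℝ] V →ₗ[ℝ] ℝ)
    (hRs : ∀ s, ∀ x ∈ Vs s, ∀ y ∈ Vs s, ∀ z ∈ Vs s, ∀ w ∈ Vs s,
      R x y z w = canACT (φs s) x y z w)
    (hmix : ∀ x y z w : V, ∀ sx sy sz sw : Fin k,
      x ∈ Vs sx → y ∈ Vs sy → z ∈ Vs sz → w ∈ Vs sw →
      ¬(sx = sy ∧ sy = sz ∧ sz = sw) → R x y z w = 0)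
    (A : V ≃ₗ[ℝ] V)
    (hA : ∀ x y z w : V, R (A x) (A y) (A z) (A w) = R x y z w)
    (i j : Fin k)
    (hAij : Submodule.map (A : V →ₗ[ℝ] V) (Vs i) = Vs j)
    -- rank φ_i ≥ 3:
    (hrank : 3 ≤ Module.finrank ℝ (Vs i))
    -- orthonormal bases realizing the signatures (p_i, q_i) and (p_j, q_j):
    (ni nj : ℕ)
    (ei : Module.Basis (Fin ni) ℝ (Vs i)) (εi : Fin ni → ℝ)
    (hεi : ∀ a, εi a = 1 ∨ εi a = -1)
    (horthi : ∀ a b, φs i (ei a : V) (ei b : V) = if a = b then εi a else 0)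
    (ej : Module.Basis (Fin nj) ℝ (Vs j)) (εj : Fin nj → ℝ)
    (hεj : ∀ a, εj a = 1 ∨ εj a = -1)
    (horthj : ∀ a b, φs j (ej a : V) (ej b : V) = if a = b then εj a else 0) :
    ((Finset.univ.filter fun a => εi a = 1).card =
        (Finset.univ.filter fun a => εj a = 1).card ∧
      (Finset.univ.filter fun a => εi a = -1).card =
        (Finset.univ.filter fun a => εj a = -1).card) ∨
    ((Finset.univ.filter fun a => εi a = 1).card =
        (Finset.univ.filter fun a => εj a = -1).card ∧
      (Finset.univ.filter fun a => εi a = -1).card =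
        (Finset.univ.filter fun a => εj a = 1).card) :=
  stmt13_general k Vs φs hsymm R hRs A hA i j hAij hrank ni nj ei εi hεi horthi ej εj hεj horthj
end

section
/- Let (V,R) = ⊕_{i=1}^k (Vᵢ, R_{φᵢ}) with each φᵢ nondegenerate and ker R = 0 (equivalently each dim Vᵢ ≥ 2). Then for every A ∈ G_R there exists a permutation σ of {1,…,k} such that A(Vᵢ) = V_{σ(i)} for all i. -/
/-!
Write `R v u` for the bilinear form `(x, y) ↦ R v u x y`. Expanding along the blocks,
`R v u = 0` iff for every `i` the components `vᵢ, uᵢ` are linearly dependent (here the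
nondegeneracy of `φᵢ` enters). Hence a nonzero `v` lies in a single block iff it is *rigid*:
every `w` with `R u w = 0` whenever `R v u = 0` is a multiple of `v` (`dim Vᵢ ≥ 2` forces the
components of such a `w` outside the block of `v` to vanish). Rigidity is defined through `R`
alone, so `A` preserves it, and `A` maps each block into the union of the blocks, hence into a
single block, since a real vector space is not a finite union of proper subspaces. Doing the
same for `A⁻¹` shows that the induced map on indices is a permutation.
-/

namespace DirectSum.IsInternal

variable {R M ι : Type*} [Semiring R] [AddCommMonoid M] [Module R M] [DecidableEq ι]
  {A : ι → Submodule R M} (h : IsInternal A)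

noncomputable def proj (i : ι) : M →ₗ[R] M :=
  (A i).subtype ∘ₗ DFinsupp.lapply i ∘ₗ
    (LinearEquiv.ofBijective (coeLinearMap A) h).symm.toLinearMap

lemma proj_mem (i : ι) (x : M) : h.proj i x ∈ A i :=
  ((LinearEquiv.ofBijective (coeLinearMap A) h).symm x i).2

lemma proj_apply_of_mem {i : ι} {x : M} (hx : x ∈ A i) : h.proj i x = x :=
  congrArg Subtype.val (h.ofBijective_coeLinearMap_of_mem hx)

lemma proj_apply_of_mem_ne {i j : ι} {x : M} (hx : x ∈ A j) (hij : i ≠ j) : h.proj i x = 0 :=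
  congrArg Subtype.val (h.ofBijective_coeLinearMap_of_mem_ne (Ne.symm hij) hx)

lemma sum_proj [Fintype ι] (x : M) : ∑ i, h.proj i x = x := by
  set d := (LinearEquiv.ofBijective (coeLinearMap A) h).symm x
  calc ∑ i, h.proj i x = coeLinearMap A (∑ i, of _ i (d i)) := by simp [proj, d]; rfl
    _ = x := by
      rw [sum_univ_of]
      exact (LinearEquiv.ofBijective (coeLinearMap A) h).apply_symm_apply x

end DirectSum.IsInternal

lemma Submodule.exists_le_of_subset_iUnion {K M ι : Type*} [Field K] [Infinite K] [Finite ι]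
    [AddCommGroup M] [Module K M] (W : Submodule K M) (p : ι → Submodule K M)
    (h : (W : Set M) ⊆ ⋃ i, (p i : Set M)) : ∃ i, W ≤ p i := by
  by_contra! hW
  obtain ⟨x, hx⟩ := exists_forall_notMem_of_forall_ne_top (fun i => (p i).comap W.subtype)
    fun i hi => hW i fun y hy => by simpa using (Submodule.eq_top_iff'.1 hi) ⟨y, hy⟩
  obtain ⟨i, hi⟩ := Set.mem_iUnion.1 (h x.2)
  exact hx i hi

lemma Submodule.not_le_span_singleton {K V : Type*} [Field K] [AddCommGroup V] [Module K V]
    {W : Submodule K V} (hW : 2 ≤ Module.finrank K W) (b : V) : ¬W ≤ K ∙ b := fun h => by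
  have := (Submodule.finrank_mono h).trans (finrank_span_le_card ({b} : Set V))
  simp only [Set.toFinset_singleton, Finset.card_singleton] at this
  omega

lemma iSupIndep.eq_of_le {R M ι : Type*} [Ring R] [AddCommGroup M] [Module R M]
    {p : ι → Submodule R M} (hp : iSupIndep p) {i j : ι} (hi : p i ≠ ⊥) (hij : p i ≤ p j) :
    i = j := by
  by_contra hne
  exact hi ((hp.pairwiseDisjoint hne).eq_bot_of_le hij)

lemma exists_perm_map_eq_of_forall_exists_map_le {R M ι : Type*} [Ring R] [AddCommGroup M]
    [Module R M] {p : ι → Submodule R M} (hp : iSupIndep p) (hne : ∀ i, p i ≠ ⊥)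
    (A : M ≃ₗ[R] M) (hA : ∀ i, ∃ j, (p i).map (A : M →ₗ[R] M) ≤ p j)
    (hA' : ∀ j, ∃ i, (p j).map (A.symm : M →ₗ[R] M) ≤ p i) :
    ∃ σ : Equiv.Perm ι, ∀ i, (p i).map (A : M →ₗ[R] M) = p (σ i) := by
  choose f hf using hA
  choose g hg using hA'
  have hgf : ∀ i, g (f i) = i := fun i => by
    have := (Submodule.map_mono (hf i)).trans (hg (f i))
    rw [(Submodule.map_symm_eq_iff A).mpr rfl] at this
    exact (hp.eq_of_le (hne i) this).symm
  have hfg : ∀ j, f (g j) = j := fun j => by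
    have := (Submodule.map_mono (hg j)).trans (hf (g j))
    rw [(Submodule.map_symm_eq_iff A).mp rfl] at this
    exact (hp.eq_of_le (hne j) this).symm
  refine ⟨⟨f, g, hgf, hfg⟩, fun i => (hf i).antisymm ?_⟩
  calc p (f i) = ((p (f i)).map (A.symm : M →ₗ[R] M)).map (A : M →ₗ[R] M) :=
        ((Submodule.map_symm_eq_iff A).mp rfl).symm
    _ ≤ (p i).map (A : M →ₗ[R] M) := by
        simpa only [hgf] using Submodule.map_mono (hg (f i))

section OnCommonLine

variable {V : Type*} [AddCommGroup V] [Module ℝ V]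

def OnCommonLine (a b : V) : Prop :=
  ∃ (c : V) (s t : ℝ), a = s • c ∧ b = t • c

lemma OnCommonLine.symm {a b : V} (h : OnCommonLine a b) : OnCommonLine b a :=
  let ⟨c, s, t, ha, hb⟩ := h
  ⟨c, t, s, hb, ha⟩

lemma onCommonLine_self (a : V) : OnCommonLine a a :=
  ⟨a, 1, 1, (one_smul ℝ a).symm, (one_smul ℝ a).symm⟩

lemma onCommonLine_zero_left (a : V) : OnCommonLine 0 a :=
  ⟨a, 0, 1, (zero_smul ℝ a).symm, (one_smul ℝ a).symm⟩

lemma onCommonLine_zero_right (a : V) : OnCommonLine a 0 :=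
  (onCommonLine_zero_left a).symm

lemma OnCommonLine.mem_span_singleton {a b : V} (h : OnCommonLine a b) (hb : b ≠ 0) :
    a ∈ ℝ ∙ b := by
  obtain ⟨c, s, t, rfl, rfl⟩ := h
  have ht : t ≠ 0 := by rintro rfl; simp at hb
  exact Submodule.mem_span_singleton.2 ⟨s / t, by rw [smul_smul, div_mul_cancel₀ s ht]⟩

lemma canACT_eq_zero_of_onCommonLine (φ : LinearMap.BilinForm ℝ V) {a b : V}
    (h : OnCommonLine a b) (x y : V) : canACT φ a b x y = 0 := by
  obtain ⟨c, s, t, rfl, rfl⟩ := h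
  simp only [canACT, map_smul, LinearMap.smul_apply, smul_eq_mul]
  ring

lemma onCommonLine_of_forall_canACT_eq_zero {φ : LinearMap.BilinForm ℝ V} {W : Submodule ℝ V}
    (hnd : ∀ v ∈ W, (∀ w ∈ W, φ v w = 0) → v = 0) {a b : V} (ha : a ∈ W) (hb : b ∈ W)
    (h : ∀ x ∈ W, ∀ y ∈ W, canACT φ a b x y = 0) : OnCommonLine a b := by
  by_cases hb0 : b = 0
  · exact hb0 ▸ onCommonLine_zero_right a
  obtain ⟨y₀, hy₀, hby₀⟩ : ∃ y₀ ∈ W, φ b y₀ ≠ 0 := by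
    by_contra! H
    exact hb0 (hnd b hb H)
  set c := φ a y₀ / φ b y₀
  -- `canACT φ a b x y₀ = 0` says `φ a x = c * φ b x`, so `a - c • b` is `φ`-orthogonal to `W`.
  have hab : a - c • b = 0 := hnd _ (sub_mem ha (W.smul_mem c hb)) fun x hx => by
    have := h x hx y₀ hy₀
    simp only [canACT] at this
    simp only [map_sub, map_smul, LinearMap.sub_apply, LinearMap.smul_apply, smul_eq_mul, c]
    field_simp
    linarith
  exact ⟨b, c, 1, sub_eq_zero.1 hab, (one_smul ℝ b).symm⟩

end OnCommonLine

def IsRigid {K V N : Type*} [Field K] [AddCommGroup V] [Module K V] [AddCommMonoid N]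
    [Module K N] (R : V →ₗ[K] V →ₗ[K] N) (v : V) : Prop :=
  ∀ w, (∀ u, R v u = 0 → R u w = 0) → w ∈ K ∙ v

lemma IsRigid.map {K V N : Type*} [Field K] [AddCommGroup V] [Module K V] [AddCommMonoid N]
    [Module K N] {R : V →ₗ[K] V →ₗ[K] N} {B : V ≃ₗ[K] V}
    (hB : ∀ x y, R (B x) (B y) = 0 ↔ R x y = 0) {v : V} (hv : IsRigid R v) :
    IsRigid R (B v) := by
  intro w hw
  obtain ⟨c, hc⟩ := Submodule.mem_span_singleton.1 <| hv (B.symm w) fun u hu => by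
    rw [← hB, B.apply_symm_apply]
    exact hw _ ((hB v u).2 hu)
  exact Submodule.mem_span_singleton.2 ⟨c, by rw [← map_smul, hc, B.apply_symm_apply]⟩

lemma apply_apply_eq_zero_iff_of_preserves {V : Type*} [AddCommGroup V] [Module ℝ V]
    {R : V →ₗ[ℝ] V →ₗ[ℝ] V →ₗ[ℝ] V →ₗ[ℝ] ℝ} {B : V ≃ₗ[ℝ] V}
    (hB : ∀ x y z w, R (B x) (B y) (B z) (B w) = R x y z w) (x y : V) :
    R (B x) (B y) = 0 ↔ R x y = 0 := by
  constructor <;> intro h <;> ext z w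
  · simpa [h] using (hB x y z w).symm
  · have := hB x y (B.symm z) (B.symm w)
    simp only [B.apply_symm_apply] at this
    simp [this, h]

section BlockSum

variable {V ι : Type*} [AddCommGroup V] [Module ℝ V] [Fintype ι] [DecidableEq ι]
  {Vs : ι → Submodule ℝ V} (hint : DirectSum.IsInternal Vs)

lemma apply_eq_sum_canACT {φs : ι → LinearMap.BilinForm ℝ V}
    {R : V →ₗ[ℝ] V →ₗ[ℝ] V →ₗ[ℝ] V →ₗ[ℝ] ℝ}
    (hRs : ∀ s, ∀ x ∈ Vs s, ∀ y ∈ Vs s, ∀ z ∈ Vs s, ∀ w ∈ Vs s,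
      R x y z w = canACT (φs s) x y z w)
    (hmix : ∀ x y z w : V, ∀ sx sy sz sw : ι,
      x ∈ Vs sx → y ∈ Vs sy → z ∈ Vs sz → w ∈ Vs sw →
      ¬(sx = sy ∧ sy = sz ∧ sz = sw) → R x y z w = 0) (v u x y : V) :
    R v u x y = ∑ m, canACT (φs m) (hint.proj m v) (hint.proj m u) (hint.proj m x)
      (hint.proj m y) := by
  conv_lhs => rw [← hint.sum_proj v, ← hint.sum_proj u, ← hint.sum_proj x, ← hint.sum_proj y]
  simp only [map_sum, LinearMap.sum_apply]
  refine Finset.sum_congr rfl fun a _ => ?_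
  have hoff : ∀ d c b, ¬(d = c ∧ c = b ∧ b = a) →
      R (hint.proj d v) (hint.proj c u) (hint.proj b x) (hint.proj a y) = 0 := fun d c b =>
    hmix _ _ _ _ d c b a (hint.proj_mem d v) (hint.proj_mem c u) (hint.proj_mem b x)
      (hint.proj_mem a y)
  rw [Fintype.sum_eq_single a fun b hb => Finset.sum_eq_zero fun c _ =>
      Finset.sum_eq_zero fun d _ => hoff d c b fun h => hb h.2.2,
    Fintype.sum_eq_single a fun c hc => Finset.sum_eq_zero fun d _ => hoff d c a fun h => hc h.2.1,
    Fintype.sum_eq_single a fun d hd => hoff d a a fun h => hd h.1]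
  exact hRs a _ (hint.proj_mem a v) _ (hint.proj_mem a u) _ (hint.proj_mem a x) _
    (hint.proj_mem a y)

lemma apply_eq_zero_iff_forall_onCommonLine_proj {φs : ι → LinearMap.BilinForm ℝ V}
    {R : V →ₗ[ℝ] V →ₗ[ℝ] V →ₗ[ℝ] V →ₗ[ℝ] ℝ}
    (hnd : ∀ s, ∀ v ∈ Vs s, (∀ w ∈ Vs s, φs s v w = 0) → v = 0)
    (hR : ∀ v u x y : V, R v u x y = ∑ m, canACT (φs m) (hint.proj m v) (hint.proj m u)
      (hint.proj m x) (hint.proj m y)) (v u : V) :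
    R v u = 0 ↔ ∀ m, OnCommonLine (hint.proj m v) (hint.proj m u) := by
  refine ⟨fun h m => ?_, fun h => ?_⟩
  · refine onCommonLine_of_forall_canACT_eq_zero (hnd m) (hint.proj_mem m v) (hint.proj_mem m u)
      fun x hx y hy => ?_
    have hxy := congrArg (fun f => f x y) h
    simp only [hR, LinearMap.zero_apply] at hxy
    rwa [Fintype.sum_eq_single m fun n hn => by simp [hint.proj_apply_of_mem_ne hx hn, canACT],
      hint.proj_apply_of_mem hx, hint.proj_apply_of_mem hy] at hxy
  · ext x y
    simpa [hR] using Finset.sum_eq_zero fun m _ => canACT_eq_zero_of_onCommonLine _ (h m) _ _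

variable {N : Type*} [AddCommMonoid N] [Module ℝ N] {R : V →ₗ[ℝ] V →ₗ[ℝ] N}

lemma isRigid_of_mem
    (hR0 : ∀ v u, R v u = 0 ↔ ∀ m, OnCommonLine (hint.proj m v) (hint.proj m u))
    (hdims : ∀ j, 2 ≤ Module.finrank ℝ (Vs j)) {i : ι} {v : V} (hv : v ∈ Vs i) (hv0 : v ≠ 0) :
    IsRigid R v := by
  intro w hw
  have hoff : ∀ j, j ≠ i → hint.proj j w = 0 := by
    intro j hj
    by_contra hwj
    refine Submodule.not_le_span_singleton (hdims j) (hint.proj j w) fun u hu => ?_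
    have hvu : R v u = 0 := (hR0 v u).2 fun m => by
      by_cases hm : m = i
      · rw [hint.proj_apply_of_mem_ne hu (hm ▸ hj.symm)]
        exact onCommonLine_zero_right _
      · rw [hint.proj_apply_of_mem_ne hv hm]
        exact onCommonLine_zero_left _
    have := (hR0 u w).1 (hw u hvu) j
    rw [hint.proj_apply_of_mem hu] at this
    exact this.mem_span_singleton hwj
  have hi := (hR0 v w).1 (hw v ((hR0 v v).2 fun m => onCommonLine_self _)) i
  rw [hint.proj_apply_of_mem hv] at hi
  rw [← hint.sum_proj w, Fintype.sum_eq_single i hoff]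
  exact hi.symm.mem_span_singleton hv0

lemma exists_mem_of_isRigid
    (hR0 : ∀ v u, R v u = 0 ↔ ∀ m, OnCommonLine (hint.proj m v) (hint.proj m u))
    {v : V} (hv0 : v ≠ 0) (hv : IsRigid R v) : ∃ i, v ∈ Vs i := by
  obtain ⟨i, hi⟩ : ∃ i, hint.proj i v ≠ 0 := by
    by_contra! h
    exact hv0 (by rw [← hint.sum_proj v]; exact Finset.sum_eq_zero fun m _ => h m)
  obtain ⟨c, hc⟩ := Submodule.mem_span_singleton.1 <| hv (hint.proj i v) fun u hu =>
    (hR0 u _).2 fun m => by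
      by_cases hm : m = i
      · subst hm
        rw [hint.proj_apply_of_mem (hint.proj_mem m v)]
        exact ((hR0 v u).1 hu m).symm
      · rw [hint.proj_apply_of_mem_ne (hint.proj_mem i v) hm]
        exact onCommonLine_zero_right _
  have hc0 : c ≠ 0 := by
    rintro rfl
    rw [zero_smul] at hc
    exact hi hc.symm
  exact ⟨i, ((Vs i).smul_mem_iff hc0).1 (hc ▸ hint.proj_mem i v)⟩

lemma exists_map_le_of_apply_eq_zero_iff
    (hR0 : ∀ v u, R v u = 0 ↔ ∀ m, OnCommonLine (hint.proj m v) (hint.proj m u))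
    (hdims : ∀ j, 2 ≤ Module.finrank ℝ (Vs j)) {B : V ≃ₗ[ℝ] V}
    (hB : ∀ x y, R (B x) (B y) = 0 ↔ R x y = 0) (i : ι) :
    ∃ j, (Vs i).map (B : V →ₗ[ℝ] V) ≤ Vs j := by
  refine Submodule.exists_le_of_subset_iUnion _ _ ?_
  rintro _ ⟨v, hv, rfl⟩
  rw [Set.mem_iUnion]
  by_cases hv0 : v = 0
  · exact ⟨i, by simp [hv0]⟩
  exact exists_mem_of_isRigid hint hR0 (B.map_ne_zero_iff.2 hv0)
    ((isRigid_of_mem hint hR0 hdims hv hv0).map hB)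

end BlockSum

theorem stmt15_general {V : Type*} [AddCommGroup V] [Module ℝ V]
    (k : ℕ) (Vs : Fin k → Submodule ℝ V) (hint : DirectSum.IsInternal Vs)
    (hdims : ∀ s, 2 ≤ Module.finrank ℝ (Vs s))
    (φs : Fin k → LinearMap.BilinForm ℝ V)
    -- each φ_s is nondegenerate on V_s:
    (hnd : ∀ s, ∀ v ∈ Vs s, (∀ w ∈ Vs s, φs s v w = 0) → v = 0)
    (R : V →ₗ[ℝ] V →ₗ[ℝ] V →ₗ[ℝ] V →ₗ[ℝ] ℝ)
    -- R restricts to R_{φ_s} on V_s: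
    (hRs : ∀ s, ∀ x ∈ Vs s, ∀ y ∈ Vs s, ∀ z ∈ Vs s, ∀ w ∈ Vs s,
      R x y z w = canACT (φs s) x y z w)
    -- R vanishes on mixed arguments:
    (hmix : ∀ x y z w : V, ∀ sx sy sz sw : Fin k,
      x ∈ Vs sx → y ∈ Vs sy → z ∈ Vs sz → w ∈ Vs sw →
      ¬(sx = sy ∧ sy = sz ∧ sz = sw) → R x y z w = 0)
    (A : V ≃ₗ[ℝ] V)
    (hA : ∀ x y z w : V, R (A x) (A y) (A z) (A w) = R x y z w) :
    ∃ σ : Equiv.Perm (Fin k), ∀ s : Fin k,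
      Submodule.map (A : V →ₗ[ℝ] V) (Vs s) = Vs (σ s) := by
  have hR0 := apply_eq_zero_iff_forall_onCommonLine_proj hint hnd
    (apply_eq_sum_canACT hint hRs hmix)
  have hA₁ : ∀ x y, R (A x) (A y) = 0 ↔ R x y = 0 := apply_apply_eq_zero_iff_of_preserves hA
  have hA₂ : ∀ x y, R (A.symm x) (A.symm y) = 0 ↔ R x y = 0 := fun x y => by
    rw [← hA₁, A.apply_symm_apply, A.apply_symm_apply]
  have hne : ∀ s, Vs s ≠ ⊥ := fun s hs => by
    have := hdims s
    rw [hs, finrank_bot] at this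
    omega
  exact exists_perm_map_eq_of_forall_exists_map_le hint.submodule_iSupIndep hne A
    (exists_map_le_of_apply_eq_zero_iff hint hR0 hdims hA₁)
    (exists_map_le_of_apply_eq_zero_iff hint hR0 hdims hA₂)

theorem stmt15 {V : Type*} [AddCommGroup V] [Module ℝ V] [FiniteDimensional ℝ V]
    (k : ℕ) (Vs : Fin k → Submodule ℝ V) (hint : DirectSum.IsInternal Vs)
    (hdims : ∀ s, 2 ≤ Module.finrank ℝ (Vs s))
    (φs : Fin k → LinearMap.BilinForm ℝ V)
    (hsymm : ∀ s, ∀ x y : V, φs s x y = φs s y x)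
    -- each φ_s is nondegenerate on V_s:
    (hnd : ∀ s, ∀ v ∈ Vs s, (∀ w ∈ Vs s, φs s v w = 0) → v = 0)
    (R : V →ₗ[ℝ] V →ₗ[ℝ] V →ₗ[ℝ] V →ₗ[ℝ] ℝ)
    -- R restricts to R_{φ_s} on V_s:
    (hRs : ∀ s, ∀ x ∈ Vs s, ∀ y ∈ Vs s, ∀ z ∈ Vs s, ∀ w ∈ Vs s,
      R x y z w = canACT (φs s) x y z w)
    -- R vanishes on mixed arguments:
    (hmix : ∀ x y z w : V, ∀ sx sy sz sw : Fin k,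
      x ∈ Vs sx → y ∈ Vs sy → z ∈ Vs sz → w ∈ Vs sw →
      ¬(sx = sy ∧ sy = sz ∧ sz = sw) → R x y z w = 0)
    -- ker R = 0:
    (hker : ∀ v : V, (∀ x y z : V, R v x y z = 0) → v = 0)
    (A : V ≃ₗ[ℝ] V)
    (hA : ∀ x y z w : V, R (A x) (A y) (A z) (A w) = R x y z w) :
    ∃ σ : Equiv.Perm (Fin k), ∀ s : Fin k,
      Submodule.map (A : V →ₗ[ℝ] V) (Vs s) = Vs (σ s) :=
  stmt15_general k Vs hint hdims φs hnd R hRs hmix A hA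
end

section
/- If R is an algebraic curvature tensor on a 2-dimensional real vector space V, then R = R_φ for some symmetric bilinear form φ on V. -/
namespace Module.Basis

variable {K V M : Type*} [CommRing K] [AddCommGroup V] [Module K V] [AddCommGroup M] [Module K M]
  (b : Basis (Fin 2) K V)

theorem det_fin_two_apply (x y : V) :
    b.det ![x, y] = b.repr x 0 * b.repr y 1 - b.repr y 0 * b.repr x 1 := by
  simp [det_apply, Matrix.det_fin_two, toMatrix_apply]

theorem sum_repr_fin_two (x : V) : b.repr x 0 • b 0 + b.repr x 1 • b 1 = x := by
  rw [← Fin.sum_univ_two (fun i => b.repr x i • b i), b.sum_repr]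

theorem apply_eq_det_smul_of_apply_self_eq_zero {B : V →ₗ[K] V →ₗ[K] M}
    (hB : ∀ x, B x x = 0) (x y : V) : B x y = b.det ![x, y] • B (b 0) (b 1) := by
  have hswap : B (b 1) (b 0) = -B (b 0) (b 1) := by
    have := hB (b 0 + b 1)
    simp only [map_add, LinearMap.add_apply, hB, zero_add, add_zero] at this
    exact eq_neg_of_add_eq_zero_left this
  conv_lhs => rw [← b.sum_repr_fin_two x, ← b.sum_repr_fin_two y]
  simp only [det_fin_two_apply, map_add, map_smul, LinearMap.add_apply, LinearMap.smul_apply,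
    hB, hswap]
  module

theorem apply_eq_det_mul_det_mul {R : V →ₗ[K] V →ₗ[K] V →ₗ[K] V →ₗ[K] K}
    (h₁ : ∀ x z w, R x x z w = 0) (h₂ : ∀ x y z, R x y z z = 0) (x y z w : V) :
    R x y z w = b.det ![x, y] * b.det ![z, w] * R (b 0) (b 1) (b 0) (b 1) := by
  rw [b.apply_eq_det_smul_of_apply_self_eq_zero (M := V →ₗ[K] V →ₗ[K] K)
      (fun x => by ext; exact h₁ x _ _) x y,
    LinearMap.smul_apply, LinearMap.smul_apply,
    b.apply_eq_det_smul_of_apply_self_eq_zero (h₂ _ _), smul_eq_mul, smul_eq_mul, mul_assoc]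

end Module.Basis

theorem canACT_toBilin {V : Type*} [AddCommGroup V] [Module ℝ V] (b : Module.Basis (Fin 2) ℝ V)
    (A : Matrix (Fin 2) (Fin 2) ℝ) (x y z w : V) :
    canACT (A.toBilin b) x y z w = -(b.det ![x, y] * b.det ![z, w] * A.det) := by
  simp only [canACT, Matrix.toBilin_apply, Fin.sum_univ_two, b.det_fin_two_apply,
    Matrix.det_fin_two]
  ring

theorem stmt17_general {V : Type*} [AddCommGroup V] [Module ℝ V] [FiniteDimensional ℝ V]
    (hdim : Module.finrank ℝ V = 2)
    (R : V →ₗ[ℝ] V →ₗ[ℝ] V →ₗ[ℝ] V →ₗ[ℝ] ℝ)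
    (hanti : ∀ x y z w : V, R x y z w = - R y x z w)
    (hpair : ∀ x y z w : V, R x y z w = R z w x y) :
    ∃ φ : LinearMap.BilinForm ℝ V, (∀ x y : V, φ x y = φ y x) ∧
      ∀ x y z w : V, R x y z w = canACT φ x y z w := by
  let b := Module.finBasisOfFinrankEq ℝ V hdim
  have hanti₂ (x y z w : V) : R x y z w = -R x y w z := by rw [hpair, hanti, hpair]
  refine ⟨(Matrix.diagonal ![1, -R (b 0) (b 1) (b 0) (b 1)]).toBilin b,
    LinearMap.BilinForm.isSymm_def.1 ((Matrix.isSymm_toBilin_iff_isSymm b).2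
      (Matrix.isSymm_diagonal _)), fun x y z w => ?_⟩
  rw [canACT_toBilin, Matrix.det_diagonal, Fin.prod_univ_two,
    b.apply_eq_det_mul_det_mul (fun x z w => by linarith [hanti x x z w])
      (fun x y z => by linarith [hanti₂ x y z z])]
  simp only [Matrix.cons_val_zero, Matrix.cons_val_one]
  ring

theorem stmt17 {V : Type*} [AddCommGroup V] [Module ℝ V] [FiniteDimensional ℝ V]
    (hdim : Module.finrank ℝ V = 2)
    (R : V →ₗ[ℝ] V →ₗ[ℝ] V →ₗ[ℝ] V →ₗ[ℝ] ℝ)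
    (hanti : ∀ x y z w : V, R x y z w = - R y x z w)
    (hpair : ∀ x y z w : V, R x y z w = R z w x y)
    (hbianchi : ∀ x y z w : V, R x y z w + R x z w y + R x w y z = 0) :
    ∃ φ : LinearMap.BilinForm ℝ V, (∀ x y : V, φ x y = φ y x) ∧
      ∀ x y z w : V, R x y z w = canACT φ x y z w :=
  stmt17_general hdim R hanti hpair
end
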